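/- Let L be a real symmetric positive semidefinite n × n matrix with L ≠ 0 and smallest nonzero eigenvalue λ_min. Let Z ∈ ℝ^{n×d} be a matrix each of whose columns is orthogonal to the kernel of L, and let w ∈ ℝ^d with ‖w‖₂ ≤ B. Then ‖Z w‖₂² ≤ (B² / λ_min) · tr(Zᵀ L Z). -/

import Mathlib

open Matrix BigOperators

-- helper: inner product on EuclideanSpace ℝ equals dotProduct
lemma inner_eq_dot {n : ℕ} (u v : EuclideanSpace ℝ (Fin n)) :
    (inner ℝ u v : ℝ) = (u : Fin n → ℝ) ⬝ᵥ (v : Fin n → ℝ) := by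
  simp [PiLp.inner_apply, dotProduct, mul_comm]

-- helper: spectral lower bound
lemma spectral_lb {n : ℕ} (L : Matrix (Fin n) (Fin n) ℝ)
    (hsymm : L.IsSymm) (hpsd : L.PosSemidef) (lammin : ℝ)
    (hlam : IsLeast {μ : ℝ | μ ≠ 0 ∧ ∃ v : Fin n → ℝ, v ≠ 0 ∧ L *ᵥ v = μ • v} lammin)
    (x : Fin n → ℝ) (hx : ∀ u : Fin n → ℝ, L *ᵥ u = 0 → x ⬝ᵥ u = 0) :
    lammin * (x ⬝ᵥ x) ≤ x ⬝ᵥ (L *ᵥ x) := by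
  have hH : L.IsHermitian := hpsd.isHermitian
  set b := hH.eigenvectorBasis with hb
  set eig := hH.eigenvalues with heig
  set x' : EuclideanSpace ℝ (Fin n) := WithLp.toLp 2 x with hx'
  -- key: ⟪b i, L *ᵥ x⟫ = eig i * ⟪b i, x⟫
  have hkey : ∀ i, (b i : Fin n → ℝ) ⬝ᵥ (L *ᵥ x) = eig i * ((b i : Fin n → ℝ) ⬝ᵥ x) := by
    intro i
    have h1 : (b i : Fin n → ℝ) ⬝ᵥ (L *ᵥ x) = (L *ᵥ (b i : Fin n → ℝ)) ⬝ᵥ x := by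
      rw [dotProduct_mulVec, ← mulVec_transpose, hsymm.eq]
    have h2 : L *ᵥ (b i : Fin n → ℝ) = eig i • (b i : Fin n → ℝ) :=
      hH.mulVec_eigenvectorBasis i
    rw [h1, h2, smul_dotProduct, smul_eq_mul]
  -- coefficients
  set c : Fin n → ℝ := fun i => (b i : Fin n → ℝ) ⬝ᵥ x with hc
  have hxx : x ⬝ᵥ x = ∑ i, c i * c i := by
    have := b.sum_inner_mul_inner x' x'
    have h2 : ∀ i, (inner ℝ x' (b i) : ℝ) = c i := fun i => by
      rw [inner_eq_dot, dotProduct_comm]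
    have h3 : ∀ i, (inner ℝ (b i) x' : ℝ) = c i := fun i => by
      rw [inner_eq_dot]
    rw [← inner_eq_dot x' x', ← this]
    exact Finset.sum_congr rfl fun i _ => by rw [h2, h3]
  set y' : EuclideanSpace ℝ (Fin n) := WithLp.toLp 2 (L *ᵥ x) with hy'
  have hxLx : x ⬝ᵥ (L *ᵥ x) = ∑ i, c i * (eig i * c i) := by
    have := b.sum_inner_mul_inner x' y'
    have h2 : ∀ i, (inner ℝ x' (b i) : ℝ) = c i := fun i => by
      rw [inner_eq_dot, dotProduct_comm]
    have h3 : ∀ i, (inner ℝ (b i) y' : ℝ) = eig i * c i := fun i => by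
      rw [inner_eq_dot]; exact hkey i
    rw [show x ⬝ᵥ (L *ᵥ x) = (inner ℝ x' y' : ℝ) from (inner_eq_dot x' y').symm, ← this]
    exact Finset.sum_congr rfl fun i _ => by rw [h2, h3]
  rw [hxx, hxLx, Finset.mul_sum]
  apply Finset.sum_le_sum
  intro i _
  by_cases h0 : eig i = 0
  · have hker : L *ᵥ (b i : Fin n → ℝ) = 0 := by
      have h2 : L *ᵥ (b i : Fin n → ℝ) = eig i • (b i : Fin n → ℝ) :=
        hH.mulVec_eigenvectorBasis i
      rw [h2, h0, zero_smul]
    have : c i = 0 := by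
      rw [hc]; simpa [dotProduct_comm] using hx (b i) hker
    simp [this]
  · have hmem : eig i ∈ {μ : ℝ | μ ≠ 0 ∧ ∃ v : Fin n → ℝ, v ≠ 0 ∧ L *ᵥ v = μ • v} := by
      refine ⟨h0, (b i : Fin n → ℝ), ?_, hH.mulVec_eigenvectorBasis i⟩
      intro hz
      have := b.orthonormal.ne_zero i
      apply this
      ext j
      exact congrFun hz j
    have hle : lammin ≤ eig i := hlam.2 hmem
    have : lammin * (c i * c i) ≤ eig i * (c i * c i) :=
      mul_le_mul_of_nonneg_right hle (mul_self_nonneg _)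
    linarith

/-- **Energy bound on linear predictions.** Let `L` be a real symmetric PSD
`n × n` matrix, `L ≠ 0`, with smallest nonzero eigenvalue `lammin`. Let
`Z : ℝ^{n×d}` have all columns orthogonal to `ker L` and let `w` satisfy
`‖w‖₂ ≤ B`. Then `‖Z w‖₂² ≤ (B² / lammin) * tr (Zᵀ L Z)`. -/
theorem pred_norm_le_energy {n d : ℕ} (L : Matrix (Fin n) (Fin n) ℝ)
    (hsymm : L.IsSymm) (hpsd : L.PosSemidef) (hne : L ≠ 0)
    (lammin : ℝ)
    (hlam : IsLeast {μ : ℝ | μ ≠ 0 ∧ ∃ v : Fin n → ℝ, v ≠ 0 ∧ L *ᵥ v = μ • v} lammin)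
    (Z : Matrix (Fin n) (Fin d) ℝ)
    (hZ : ∀ (j : Fin d) (u : Fin n → ℝ), L *ᵥ u = 0 → (fun i => Z i j) ⬝ᵥ u = 0)
    (w : Fin d → ℝ) (B : ℝ) (hB : 0 < B)
    (hw : Real.sqrt (w ⬝ᵥ w) ≤ B) :
    (Z *ᵥ w) ⬝ᵥ (Z *ᵥ w) ≤ (B ^ 2 / lammin) * (Zᵀ * L * Z).trace := by
  -- lammin > 0
  obtain ⟨hne0, v, hv0, hvL⟩ := hlam.1
  have hvv : 0 < v ⬝ᵥ v := by
    rcases lt_or_eq_of_le (Finset.sum_nonneg fun i _ => mul_self_nonneg (v i) :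
        (0:ℝ) ≤ v ⬝ᵥ v) with h | h
    · exact h
    · exact absurd (dotProduct_self_eq_zero.mp h.symm) hv0
  have hlampos : 0 < lammin := by
    have h1 : 0 ≤ v ⬝ᵥ (L *ᵥ v) := by simpa using hpsd.dotProduct_mulVec_nonneg v
    rw [hvL, dotProduct_smul, smul_eq_mul] at h1
    rcases hne0.lt_or_gt with h | h
    · nlinarith
    · exact h
  -- x := Z *ᵥ w is orthogonal to ker L
  set x : Fin n → ℝ := Z *ᵥ w with hx
  have hxker : ∀ u : Fin n → ℝ, L *ᵥ u = 0 → x ⬝ᵥ u = 0 := by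
    intro u hu
    have h1 : w ⬝ᵥ (Zᵀ *ᵥ u) = x ⬝ᵥ u := by
      rw [dotProduct_mulVec, vecMul_transpose, dotProduct_comm]
    have h2 : Zᵀ *ᵥ u = 0 := by
      ext j
      simpa [mulVec, transpose, dotProduct] using hZ j u hu
    rw [← h1, h2, dotProduct_zero]
  have hspec := spectral_lb L hsymm hpsd lammin hlam x hxker
  -- sqrt factorization
  set C := (open scoped MatrixOrder in CFC.sqrt L) with hC
  have hCC : C * C = L := by
    open scoped MatrixOrder in exact CFC.sqrt_mul_sqrt_self L hpsd.nonneg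
  have hCsym : Cᵀ = C := by
    have : C.IsHermitian := by
      open scoped MatrixOrder in exact (CFC.sqrt_nonneg L).posSemidef.isHermitian
    simpa [Matrix.IsHermitian, Matrix.conjTranspose_eq_transpose_of_trivial] using this
  set A := C * Z with hA
  set s : Fin n → ℝ := A *ᵥ w with hs
  have hsx : s = C *ᵥ x := by rw [hs, hA, ← mulVec_mulVec]
  have hxLx : x ⬝ᵥ (L *ᵥ x) = s ⬝ᵥ s := by
    rw [hsx, ← hCC, ← mulVec_mulVec, dotProduct_mulVec, ← mulVec_transpose, hCsym]
  -- trace as Frobenius norm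
  have htr : (Zᵀ * L * Z).trace = ∑ j, ∑ i, (A i j) ^ 2 := by
    have h1 : Zᵀ * L * Z = Aᵀ * A := by
      rw [hA, transpose_mul, hCsym, ← hCC]
      simp only [Matrix.mul_assoc]
    rw [h1, Matrix.trace]
    apply Finset.sum_congr rfl
    intro j _
    simp [Matrix.mul_apply, transpose_apply, dotProduct, sq, diag]
  -- w bound
  have hww : w ⬝ᵥ w ≤ B ^ 2 := by
    have h0 : (0:ℝ) ≤ w ⬝ᵥ w := Finset.sum_nonneg fun i _ => mul_self_nonneg (w i)
    have h1 : w ⬝ᵥ w = Real.sqrt (w ⬝ᵥ w) ^ 2 := (Real.sq_sqrt h0).symm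
    rw [h1]
    exact pow_le_pow_left₀ (Real.sqrt_nonneg _) hw 2
  -- Cauchy–Schwarz rowwise
  have hcs : s ⬝ᵥ s ≤ (w ⬝ᵥ w) * ∑ j, ∑ i, (A i j) ^ 2 := by
    rw [Finset.sum_comm, Finset.mul_sum]
    apply Finset.sum_le_sum
    intro i _
    have h1 : s i = ∑ j, A i j * w j := rfl
    have h2 := Finset.sum_mul_sq_le_sq_mul_sq Finset.univ (fun j => A i j) w
    have h3 : w ⬝ᵥ w = ∑ j, w j ^ 2 := by simp [dotProduct, sq]
    rw [h1, h3, ← sq, mul_comm]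
    exact h2
  have hfrob : (0:ℝ) ≤ ∑ j, ∑ i, (A i j) ^ 2 := by positivity
  have hss : s ⬝ᵥ s ≤ B ^ 2 * ∑ j, ∑ i, (A i j) ^ 2 :=
    le_trans hcs (mul_le_mul_of_nonneg_right hww hfrob)
  have hxx : x ⬝ᵥ x ≤ (B ^ 2 * ∑ j, ∑ i, (A i j) ^ 2) / lammin := by
    rw [le_div_iff₀ hlampos]
    calc x ⬝ᵥ x * lammin = lammin * (x ⬝ᵥ x) := by ring
      _ ≤ x ⬝ᵥ (L *ᵥ x) := hspec
      _ = s ⬝ᵥ s := hxLx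
      _ ≤ _ := hss
  calc (Z *ᵥ w) ⬝ᵥ (Z *ᵥ w) = x ⬝ᵥ x := rfl
    _ ≤ (B ^ 2 * ∑ j, ∑ i, (A i j) ^ 2) / lammin := hxx
    _ = (B ^ 2 / lammin) * (Zᵀ * L * Z).trace := by rw [htr]; ring
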